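/- arXiv:1906.08329 — 6 statements merged into one kernel-verified Lean document; each statement's English description precedes it below -/
import Mathlib

section
/- Let S be a semigroup, λ a nonzero cardinal and n a positive integer with n ≤ λ. For every positive integer i ≤ n, a nonzero element of 𝓘_λ^n(S) given by the partial injective map a₁,…,a_i ↦ b₁,…,b_i with S-values s₁,…,s_i is an idempotent of 𝓘_λ^n(S) if and only if a₁ = b₁, …, a_i = b_i and s₁,…,s_i are idempotents of S. -/
open Classical

namespace ISemExt

/-- Carrier for the extension `𝓘_λ^n(S)`: an element is a function assigning to each
pair `(x,y)` of points of `lam` an optional value in `S` (its labelled graph). -/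
def Elem (lam S : Type) : Type := lam → lam → Option S

/-- The zero element (the empty map). -/
def zeroE (lam S : Type) : Elem lam S := fun _ _ => none

/-- Multiplication in `𝓘_λ^n(S)`: composition of labelled partial maps,
multiplying the labels along composable pairs. -/
noncomputable def mulE {lam S : Type} [Mul S] (f g : Elem lam S) : Elem lam S :=
  fun x z =>
    if h : ∃ y s t, f x y = some s ∧ g y z = some t then
      some (h.choose_spec.choose * h.choose_spec.choose_spec.choose)
    else none

/-- The graph of an element. -/
def graphOf {lam S : Type} (f : Elem lam S) : Set (lam × lam) :=
  {p | (f p.1 p.2).isSome}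

/-- `Valid n f` says that `f` is an element of `𝓘_λ^n(S)`: it is a partial
injective labelled map (in both directions) of rank at most `n`. -/
def Valid {lam S : Type} (n : ℕ) (f : Elem lam S) : Prop :=
  (∀ ⦃x y₁ y₂⦄, (f x y₁).isSome → (f x y₂).isSome → y₁ = y₂) ∧
  (∀ ⦃x₁ x₂ y⦄, (f x₁ y).isSome → (f x₂ y).isSome → x₁ = x₂) ∧
  (graphOf f).Finite ∧ (graphOf f).ncard ≤ n

/-- The element with rows `(a₁,…,a_i)`, `(s₁,…,s_i)`, `(b₁,…,b_i)`. -/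
noncomputable def mk3 {lam S : Type} {i : ℕ} (a : Fin i → lam) (s : Fin i → S)
    (b : Fin i → lam) : Elem lam S :=
  fun x y => if h : ∃ j, a j = x ∧ b j = y then some (s h.choose) else none

/-- A nonzero element of `𝓘_λ^n(S)` with rows `(a₁,…,a_i)`, `(s₁,…,s_i)`, `(b₁,…,b_i)`
is an idempotent if and only if `a₁ = b₁, …, a_i = b_i` and `s₁,…,s_i` are
idempotents of `S`. -/
theorem idempotent_iff (lam S : Type) [Nonempty lam] [Semigroup S]
    (n i : ℕ) (hn : 0 < n) (hcard : (n : Cardinal) ≤ Cardinal.mk lam)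
    (hi : 0 < i) (hin : i ≤ n)
    (a b : Fin i → lam) (s : Fin i → S)
    (ha : Function.Injective a) (hb : Function.Injective b) :
    mulE (mk3 a s b) (mk3 a s b) = mk3 a s b ↔
      (∀ j, a j = b j) ∧ (∀ j, s j * s j = s j) := by
  set m := mk3 a s b with hm
  have fact1 : ∀ j, m (a j) (b j) = some (s j) := by
    intro j
    have h : ∃ k, a k = a j ∧ b k = b j := ⟨j, rfl, rfl⟩
    have hj : h.choose = j := ha h.choose_spec.1
    simp only [hm, mk3, dif_pos h, hj]
  have fact2 : ∀ x y v, m x y = some v → ∃ j, a j = x ∧ b j = y ∧ v = s j := by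
    intro x y v hv
    simp only [hm, mk3] at hv
    split at hv
    · rename_i h
      exact ⟨h.choose, h.choose_spec.1, h.choose_spec.2, (Option.some.inj hv).symm⟩
    · exact absurd hv (by simp)
  have fact3 : ∀ x z v, mulE m m x z = some v →
      ∃ y u t, m x y = some u ∧ m y z = some t ∧ v = u * t := by
    intro x z v hv
    simp only [mulE] at hv
    split at hv
    · rename_i h
      exact ⟨h.choose, h.choose_spec.choose, h.choose_spec.choose_spec.choose,
        h.choose_spec.choose_spec.choose_spec.1,
        h.choose_spec.choose_spec.choose_spec.2, (Option.some.inj hv).symm⟩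
    · exact absurd hv (by simp)
  have fact4 : ∀ x y z u t, m x y = some u → m y z = some t →
      mulE m m x z = some (u * t) := by
    intro x y z u t hu ht
    have h : ∃ y' u' t', m x y' = some u' ∧ m y' z = some t' := ⟨y, u, t, hu, ht⟩
    obtain ⟨j, hja, hjb, hjs⟩ := fact2 _ _ _ hu
    obtain ⟨k, hka, hkb, hks⟩ := fact2 _ _ _ ht
    obtain ⟨j', hj'a, hj'b, hj's⟩ := fact2 _ _ _ h.choose_spec.choose_spec.choose_spec.1
    obtain ⟨k', hk'a, hk'b, hk's⟩ := fact2 _ _ _ h.choose_spec.choose_spec.choose_spec.2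
    have hjj : j' = j := ha (hj'a.trans hja.symm)
    have hkk : k' = k := hb (hk'b.trans hkb.symm)
    have hX : h.choose_spec.choose = u := hj's.trans (by rw [hjj, hjs])
    have hY : h.choose_spec.choose_spec.choose = t := hk's.trans (by rw [hkk, hks])
    simp only [mulE, dif_pos h]
    exact congrArg some (congrArg₂ (· * ·) hX hY)
  constructor
  · intro heq
    have hab : ∀ j, a j = b j := by
      intro j
      have h1 : mulE m m (a j) (b j) = some (s j) := by rw [heq]; exact fact1 j
      obtain ⟨y, u, t, hu, ht, _⟩ := fact3 _ _ _ h1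
      obtain ⟨j₁, h1a, h1b, _⟩ := fact2 _ _ _ hu
      obtain ⟨j₂, h2a, h2b, _⟩ := fact2 _ _ _ ht
      have e1 : j₁ = j := ha h1a
      have e2 : j₂ = j := hb h2b
      have e3 : a j = y := by rw [← e2]; exact h2a
      have e4 : b j = y := by rw [← e1]; exact h1b
      exact e3.trans e4.symm
    refine ⟨hab, fun j => ?_⟩
    have h1 : m (a j) (a j) = some (s j) := by
      have h0 := fact1 j; rwa [← hab j] at h0
    have h2 := fact4 _ _ _ _ _ h1 h1
    rw [heq, h1] at h2
    exact (Option.some.inj h2).symm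
  · rintro ⟨hab, hss⟩
    funext x z
    cases hmz : m x z with
    | some v =>
      obtain ⟨j, hja, hjb, hjs⟩ := fact2 _ _ _ hmz
      have hxz : x = z := by rw [← hja, ← hjb, ← hab j]
      subst hxz
      rw [hjs] at hmz
      rw [fact4 _ _ _ _ _ hmz hmz, hss j, hjs]
    | none =>
      by_contra hne
      obtain ⟨v, hv⟩ := Option.ne_none_iff_exists'.mp hne
      obtain ⟨y, u, t, hu, ht, _⟩ := fact3 _ _ _ hv
      obtain ⟨j, hja, hjb, _⟩ := fact2 _ _ _ hu
      obtain ⟨k, hka, hkb, _⟩ := fact2 _ _ _ ht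
      have hkj : k = j := ha (by rw [hka, ← hjb, ← hab j])
      have hcon : m x z = some (s j) := by
        rw [← hja, ← hkb, hkj]; exact fact1 j
      rw [hmz] at hcon
      exact Option.some_ne_none _ hcon.symm

end ISemExt
end

section
/- Let S be a semigroup, λ a nonzero cardinal and n a positive integer with n ≤ λ. For every positive integer i ≤ n, a nonzero element of 𝓘_λ^n(S) given by the partial injective map a₁,…,a_i ↦ b₁,…,b_i with S-values s₁,…,s_i is a regular element of 𝓘_λ^n(S) (i.e. x = x·y·x for some y) if and only if s₁,…,s_i are regular elements of S. -/
/-!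
Composition of labelled partial bijections is computed pointwise along matching indices:
`(a ↦ b, s) · (b ↦ c, t) = (a ↦ c, s t)`. Hence the inverse bijection `b ↦ a` labelled by
inner inverses `t j` of the `s j` is an inner inverse of `(a ↦ b, s)`. Conversely, in any
product `x g x` the point `a j` must be sent by `x` to `b j`, then by `g` back to `a j`
(the only preimage of `b j` under `x`) with some label `u`, so `s j = s j u s j`.
-/

open Classical

namespace ISemExt

section Labelled

variable {lam S : Type}

def Functional (f : Elem lam S) : Prop :=
  ∀ ⦃x y₁ y₂⦄, (f x y₁).isSome → (f x y₂).isSome → y₁ = y₂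

theorem exists_of_mulE_eq_some [Mul S] {f g : Elem lam S} {x z : lam} {w : S}
    (h : mulE f g x z = some w) : ∃ y u v, f x y = some u ∧ g y z = some v ∧ u * v = w := by
  unfold mulE at h
  split_ifs at h with hy
  obtain ⟨hu, hv⟩ := hy.choose_spec.choose_spec.choose_spec
  exact ⟨_, _, _, hu, hv, Option.some.inj h⟩

theorem mulE_eq_some_iff [Mul S] {f g : Elem lam S} (hf : Functional f) {x z : lam} {w : S} :
    mulE f g x z = some w ↔ ∃ y u v, f x y = some u ∧ g y z = some v ∧ u * v = w := by
  refine ⟨exists_of_mulE_eq_some, ?_⟩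
  rintro ⟨y, u, v, hu, hv, rfl⟩
  have hex : ∃ y u v, f x y = some u ∧ g y z = some v := ⟨y, u, v, hu, hv⟩
  obtain ⟨hu', hv'⟩ := hex.choose_spec.choose_spec.choose_spec
  obtain rfl : hex.choose = y := hf (Option.isSome_of_eq_some hu') (Option.isSome_of_eq_some hu)
  rw [mulE, dif_pos hex, Option.some.injEq, ← Option.some.inj (hu'.symm.trans hu),
    ← Option.some.inj (hv'.symm.trans hv)]

variable {i : ℕ} {a b c : Fin i → lam} {s t : Fin i → S}

theorem exists_of_mk3_eq_some {x y : lam} {v : S} (h : mk3 a s b x y = some v) :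
    ∃ j, a j = x ∧ b j = y ∧ s j = v := by
  unfold mk3 at h
  split_ifs at h with hj
  exact ⟨hj.choose, hj.choose_spec.1, hj.choose_spec.2, Option.some.inj h⟩

theorem mk3_apply (ha : Function.Injective a) (j : Fin i) :
    mk3 a s b (a j) (b j) = some (s j) := by
  have h : ∃ k, a k = a j ∧ b k = b j := ⟨j, rfl, rfl⟩
  rw [mk3, dif_pos h, ha h.choose_spec.1]

theorem mk3_eq_some_iff (ha : Function.Injective a) {x y : lam} {v : S} :
    mk3 a s b x y = some v ↔ ∃ j, a j = x ∧ b j = y ∧ s j = v := by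
  refine ⟨exists_of_mk3_eq_some, ?_⟩
  rintro ⟨j, rfl, rfl, rfl⟩
  exact mk3_apply ha j

theorem mk3_functional (ha : Function.Injective a) : Functional (mk3 a s b) := by
  intro x y₁ y₂ h₁ h₂
  obtain ⟨j, rfl, rfl, -⟩ := exists_of_mk3_eq_some (Option.get_mem h₁)
  obtain ⟨k, hk, rfl, -⟩ := exists_of_mk3_eq_some (Option.get_mem h₂)
  rw [ha hk]

theorem mk3_injective (hb : Function.Injective b) {x₁ x₂ y : lam}
    (h₁ : (mk3 a s b x₁ y).isSome) (h₂ : (mk3 a s b x₂ y).isSome) : x₁ = x₂ := by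
  obtain ⟨j, rfl, rfl, -⟩ := exists_of_mk3_eq_some (Option.get_mem h₁)
  obtain ⟨k, rfl, hk, -⟩ := exists_of_mk3_eq_some (Option.get_mem h₂)
  rw [hb hk]

theorem graphOf_mk3_subset : graphOf (mk3 a s b) ⊆ Set.range fun j => (a j, b j) := by
  rintro ⟨x, y⟩ h
  obtain ⟨j, rfl, rfl, -⟩ := exists_of_mk3_eq_some (Option.get_mem h)
  exact ⟨j, rfl⟩

theorem valid_mk3 {n : ℕ} (ha : Function.Injective a) (hb : Function.Injective b)
    (hin : i ≤ n) : Valid n (mk3 a s b) := by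
  have hpair : Function.Injective fun j => (a j, b j) := fun j k h => ha (Prod.ext_iff.mp h).1
  refine ⟨mk3_functional ha, fun _ _ _ => mk3_injective hb,
    (Set.finite_range _).subset graphOf_mk3_subset, ?_⟩
  calc (graphOf (mk3 a s b)).ncard
      ≤ (Set.range fun j => (a j, b j)).ncard := Set.ncard_le_ncard graphOf_mk3_subset
    _ = i := by rw [Set.ncard_range_of_injective hpair, Nat.card_eq_fintype_card, Fintype.card_fin]
    _ ≤ n := hin

theorem mulE_mk3_mk3 [Mul S] (ha : Function.Injective a) (hb : Function.Injective b) :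
    mulE (mk3 a s b) (mk3 b t c) = mk3 a (fun j => s j * t j) c := by
  funext x z
  refine Option.ext fun w => ?_
  rw [mulE_eq_some_iff (mk3_functional ha), mk3_eq_some_iff ha]
  constructor
  · rintro ⟨y, u, v, hu, hv, rfl⟩
    obtain ⟨j, rfl, rfl, rfl⟩ := exists_of_mk3_eq_some hu
    obtain ⟨k, hk, rfl, rfl⟩ := exists_of_mk3_eq_some hv
    obtain rfl := hb hk
    exact ⟨_, rfl, rfl, rfl⟩
  · rintro ⟨j, rfl, rfl, rfl⟩
    exact ⟨b j, s j, t j, mk3_apply ha j, mk3_apply hb j, rfl⟩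

theorem exists_eq_mul_mul_of_mulE_mulE_mk3_eq_some [Mul S] (ha : Function.Injective a)
    (hb : Function.Injective b) {g : Elem lam S} {j : Fin i} {w : S}
    (h : mulE (mulE (mk3 a s b) g) (mk3 a s b) (a j) (b j) = some w) :
    ∃ u, w = s j * u * s j := by
  obtain ⟨y, p, q, hp, hq, rfl⟩ := exists_of_mulE_eq_some h
  obtain ⟨k, rfl, hk, rfl⟩ := exists_of_mk3_eq_some hq
  obtain rfl := hb hk
  obtain ⟨z, r, u, hr, -, rfl⟩ := exists_of_mulE_eq_some hp
  obtain ⟨l, hl, rfl, rfl⟩ := exists_of_mk3_eq_some hr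
  obtain rfl := ha hl
  exact ⟨u, rfl⟩

end Labelled

theorem regular_element_iff_general (lam S : Type) [Semigroup S]
    (n i : ℕ) (hin : i ≤ n)
    (a b : Fin i → lam) (s : Fin i → S)
    (ha : Function.Injective a) (hb : Function.Injective b) :
    (∃ g : Elem lam S, Valid n g ∧
        mk3 a s b = mulE (mulE (mk3 a s b) g) (mk3 a s b)) ↔
      (∀ j, ∃ t : S, s j = s j * t * s j) := by
  constructor
  · rintro ⟨g, -, heq⟩ j
    exact exists_eq_mul_mul_of_mulE_mulE_mk3_eq_some ha hb (heq ▸ mk3_apply ha j)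
  · intro h
    choose t ht using h
    refine ⟨mk3 b t a, valid_mk3 hb ha hin, ?_⟩
    rw [mulE_mk3_mk3 ha hb, mulE_mk3_mk3 ha ha]
    exact congrArg (mk3 a · b) (funext ht)

/-- A nonzero element of `𝓘_λ^n(S)` with rows `(a₁,…,a_i)`, `(s₁,…,s_i)`, `(b₁,…,b_i)`
is regular in `𝓘_λ^n(S)` if and only if `s₁,…,s_i` are regular elements of `S`. -/
theorem regular_element_iff (lam S : Type) [Nonempty lam] [Semigroup S]
    (n i : ℕ) (hn : 0 < n) (hcard : (n : Cardinal) ≤ Cardinal.mk lam)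
    (hi : 0 < i) (hin : i ≤ n)
    (a b : Fin i → lam) (s : Fin i → S)
    (ha : Function.Injective a) (hb : Function.Injective b) :
    (∃ g : Elem lam S, Valid n g ∧
        mk3 a s b = mulE (mulE (mk3 a s b) g) (mk3 a s b)) ↔
      (∀ j, ∃ t : S, s j = s j * t * s j) :=
  regular_element_iff_general lam S n i hin a b s ha hb

end ISemExt
end

section
/- Let S be a semigroup, λ a nonzero cardinal and n a positive integer with n ≤ λ. Then the semigroup 𝓘_λ^n(S) is regular (every element x satisfies x = xyx for some y) if and only if S is regular. -/
open Classical

namespace ISemExt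

lemma mulE_some_elim {lam S : Type} [Mul S] {f g : Elem lam S} {x z : lam} {u : S}
    (h : mulE f g x z = some u) :
    ∃ y s t, f x y = some s ∧ g y z = some t ∧ u = s * t := by
  unfold mulE at h
  split at h
  · next hc =>
    exact ⟨hc.choose, hc.choose_spec.choose, hc.choose_spec.choose_spec.choose,
      hc.choose_spec.choose_spec.choose_spec.1,
      hc.choose_spec.choose_spec.choose_spec.2, (Option.some.inj h).symm⟩
  · simp at h

lemma mulE_eq_none' {lam S : Type} [Mul S] {f g : Elem lam S} {x z : lam}
    (h : ¬ ∃ y s t, f x y = some s ∧ g y z = some t) :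
    mulE f g x z = none := dif_neg h

lemma mulE_eq_some {lam S : Type} [Mul S] {f g : Elem lam S} {x z y : lam} {s t : S}
    (hf : f x y = some s) (hg : g y z = some t)
    (huniq : ∀ y' s' t', f x y' = some s' → g y' z = some t' → y' = y ∧ s' = s ∧ t' = t) :
    mulE f g x z = some (s * t) := by
  have h : ∃ y s t, f x y = some s ∧ g y z = some t := ⟨y, s, t, hf, hg⟩
  unfold mulE
  rw [dif_pos h]
  obtain ⟨e1, e2, e3⟩ := huniq _ _ _ h.choose_spec.choose_spec.choose_spec.1
    h.choose_spec.choose_spec.choose_spec.2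
  exact congrArg some (congrArg₂ (· * ·) e2 e3)

/-- The semigroup `𝓘_λ^n(S)` is regular if and only if `S` is regular. -/
theorem regular_iff (lam S : Type) [Nonempty lam] [Semigroup S]
    (n : ℕ) (hn : 0 < n) (hcard : (n : Cardinal) ≤ Cardinal.mk lam) :
    (∀ f : Elem lam S, Valid n f →
        ∃ g : Elem lam S, Valid n g ∧ f = mulE (mulE f g) f) ↔
      (∀ a : S, ∃ b : S, a = a * b * a) := by
  constructor
  · -- forward: regularity of the extension implies regularity of S
    intro hreg a
    obtain ⟨x0⟩ := ‹Nonempty lam›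
    set f : Elem lam S := fun x y => if x = x0 ∧ y = x0 then some a else none with hfdef
    have hfx : f x0 x0 = some a := by simp [hfdef]
    have hfsome : ∀ x y s, f x y = some s → x = x0 ∧ y = x0 ∧ s = a := by
      intro x y s h
      simp only [hfdef] at h
      split at h
      · next hc => exact ⟨hc.1, hc.2, (Option.some.inj h).symm⟩
      · simp at h
    have hgraph : graphOf f = {(x0, x0)} := by
      ext ⟨x, y⟩
      simp only [graphOf, Set.mem_setOf_eq, Set.mem_singleton_iff, Option.isSome_iff_exists,
        Prod.mk.injEq]
      constructor
      · rintro ⟨s, hs⟩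
        obtain ⟨h1, h2, _⟩ := hfsome _ _ _ hs
        exact ⟨h1, h2⟩
      · rintro ⟨rfl, rfl⟩
        exact ⟨a, hfx⟩
    have hvalid : Valid n f := by
      refine ⟨?_, ?_, ?_, ?_⟩
      · intro x y₁ y₂ h1 h2
        obtain ⟨s1, hs1⟩ := Option.isSome_iff_exists.mp h1
        obtain ⟨s2, hs2⟩ := Option.isSome_iff_exists.mp h2
        rw [(hfsome _ _ _ hs1).2.1, (hfsome _ _ _ hs2).2.1]
      · intro x₁ x₂ y h1 h2
        obtain ⟨s1, hs1⟩ := Option.isSome_iff_exists.mp h1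
        obtain ⟨s2, hs2⟩ := Option.isSome_iff_exists.mp h2
        rw [(hfsome _ _ _ hs1).1, (hfsome _ _ _ hs2).1]
      · rw [hgraph]; exact Set.finite_singleton _
      · rw [hgraph, Set.ncard_singleton]; exact hn
    obtain ⟨g, hgv, heq⟩ := hreg f hvalid
    have h0 : mulE (mulE f g) f x0 x0 = some a := by rw [← heq]; exact hfx
    obtain ⟨z, s, t, h1, h2, h3⟩ := mulE_some_elim h0
    obtain ⟨hz, -, ht⟩ := hfsome _ _ _ h2
    subst hz
    obtain ⟨y', s', b, h4, h5, h6⟩ := mulE_some_elim h1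
    obtain ⟨-, -, hs'⟩ := hfsome _ _ _ h4
    refine ⟨b, ?_⟩
    rw [h6, hs', ht] at h3
    exact h3
  · -- backward: regularity of S implies regularity of the extension
    intro hreg f hf
    obtain ⟨hrow, hcol, hfin, hcard'⟩ := hf
    classical
    set bfun : S → S := fun s => (hreg s).choose with hbdef
    have hbspec : ∀ s : S, s = s * bfun s * s := fun s => (hreg s).choose_spec
    set g : Elem lam S := fun x y => (f y x).map bfun with hgdef
    have hg_some : ∀ x y t, g x y = some t → ∃ s, f y x = some s ∧ t = bfun s := by
      intro x y t h
      simp only [hgdef, Option.map_eq_some_iff] at h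
      obtain ⟨s, hs, ht⟩ := h
      exact ⟨s, hs, ht.symm⟩
    have hg_isSome : ∀ x y, (g x y).isSome = (f y x).isSome := by
      intro x y; simp [hgdef]
    have hggraph : graphOf g = Prod.swap '' graphOf f := by
      ext ⟨x, y⟩
      simp only [graphOf, Set.mem_setOf_eq, Set.mem_image, Prod.exists, Prod.swap_prod_mk,
        Prod.mk.injEq]
      constructor
      · intro h
        exact ⟨y, x, by rwa [hg_isSome] at h, rfl, rfl⟩
      · rintro ⟨a, b, hab, rfl, rfl⟩
        rwa [hg_isSome]
    refine ⟨g, ⟨?_, ?_, ?_, ?_⟩, ?_⟩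
    · intro x y₁ y₂ h1 h2
      rw [hg_isSome] at h1 h2
      exact hcol h1 h2
    · intro x₁ x₂ y h1 h2
      rw [hg_isSome] at h1 h2
      exact hrow h1 h2
    · rw [hggraph]; exact hfin.image _
    · rw [hggraph, Set.ncard_image_of_injective _ Prod.swap_injective]; exact hcard'
    · funext x y
      match hxy : f x y with
      | some s =>
        have hgyx : g y x = some (bfun s) := by
          simp [hgdef, hxy]
        have step1 : mulE f g x x = some (s * bfun s) := by
          refine mulE_eq_some hxy hgyx ?_
          intro y' s' t' h1 h2
          obtain ⟨s'', h3, h4⟩ := hg_some _ _ _ h2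
          have hy : y' = y := hrow (by rw [h1]; rfl) (by rw [hxy]; rfl)
          subst hy
          have hs : s' = s := by rw [h1] at hxy; exact Option.some.inj hxy
          have hs2 : s'' = s' := by rw [h1] at h3; exact (Option.some.inj h3).symm
          exact ⟨rfl, hs, by rw [h4, hs2, hs]⟩
        have step2 : mulE (mulE f g) f x y = some ((s * bfun s) * s) := by
          refine mulE_eq_some step1 hxy ?_
          intro z s' t' h1 h2
          obtain ⟨y', u, v, h3, h4, h5⟩ := mulE_some_elim h1
          obtain ⟨w, h6, h7⟩ := hg_some _ _ _ h4
          have hz : x = z := hcol (by rw [h3]; rfl) (by rw [h6]; rfl)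
          subst hz
          rw [step1] at h1
          have ht : t' = s := by rw [h2] at hxy; exact Option.some.inj hxy
          exact ⟨rfl, (Option.some.inj h1).symm, ht⟩
        rw [step2, ← hbspec s]
      | none =>
        symm
        refine mulE_eq_none' ?_
        rintro ⟨z, s, t, h1, h2⟩
        obtain ⟨y', u, v, h3, h4, h5⟩ := mulE_some_elim h1
        obtain ⟨w, h6, h7⟩ := hg_some _ _ _ h4
        have hz : x = z := hcol (by rw [h3]; rfl) (by rw [h6]; rfl)
        subst hz
        rw [hxy] at h2
        exact nomatch h2


end ISemExt
end

section
/- Let S be a semigroup, λ a nonzero cardinal and n a positive integer with n ≤ λ. Then the semigroup 𝓘_λ^n(S) is an inverse semigroup (every element has a unique inverse) if and only if S is an inverse semigroup. -/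
open Classical

namespace ISemExt

/-! ### Auxiliary lemmas -/

section Aux

variable {lam S : Type} [Mul S]

lemma mulE_some {f g : Elem lam S} {x y z : lam} {s t : S}
    (huniq : ∀ ⦃y'⦄, (f x y').isSome → y' = y)
    (hf : f x y = some s) (hg : g y z = some t) :
    mulE f g x z = some (s * t) := by
  have h : ∃ y s t, f x y = some s ∧ g y z = some t := ⟨y, s, t, hf, hg⟩
  unfold mulE
  rw [dif_pos h]
  obtain ⟨hf', hg'⟩ := h.choose_spec.choose_spec.choose_spec
  have hy : h.choose = y := huniq (by rw [hf']; rfl)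
  have e1 : f x h.choose = f x y := by rw [hy]
  have e2 : g h.choose z = g y z := by rw [hy]
  have hs : h.choose_spec.choose = s :=
    Option.some.inj ((hf'.symm.trans e1).trans hf)
  have ht : h.choose_spec.choose_spec.choose = t :=
    Option.some.inj ((hg'.symm.trans e2).trans hg)
  exact congrArg some (congr (congrArg HMul.hMul hs) ht)

lemma mulE_isSome {f g : Elem lam S} {x z : lam} (h : (mulE f g x z).isSome) :
    ∃ y s t, f x y = some s ∧ g y z = some t := by
  by_contra hc
  unfold mulE at h
  rw [dif_neg hc] at h
  simp at h

lemma mulE_none {f g : Elem lam S} {x z : lam}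
    (h : ¬ ∃ y s t, f x y = some s ∧ g y z = some t) :
    mulE f g x z = none := by
  unfold mulE; rw [dif_neg h]

/-- Rank-one element supported at `(x0, x0)` with label `c`. -/
noncomputable def single (x0 : lam) (c : S) : Elem lam S :=
  fun x y => if x = x0 ∧ y = x0 then some c else none

lemma single_apply (x0 : lam) (c : S) : single x0 c x0 x0 = some c := by
  simp [single]

lemma single_some {x0 : lam} {c : S} {x y : lam} (h : (single x0 c x y).isSome) :
    x = x0 ∧ y = x0 := by
  by_contra hc
  simp only [single, if_neg hc, Option.isSome_none] at h
  exact Bool.false_ne_true h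

lemma single_valid {n : ℕ} (hn : 0 < n) (x0 : lam) (c : S) :
    Valid n (single x0 c) := by
  have hgraph : graphOf (single x0 c) = {(x0, x0)} := by
    ext ⟨x, y⟩
    simp only [graphOf, Set.mem_setOf_eq, Set.mem_singleton_iff, Prod.mk.injEq]
    constructor
    · intro h; exact single_some h
    · rintro ⟨rfl, rfl⟩; rw [single_apply]; rfl
  refine ⟨?_, ?_, ?_, ?_⟩
  · intro x y1 y2 h1 h2; rw [(single_some h1).2, (single_some h2).2]
  · intro x1 x2 y h1 h2; rw [(single_some h1).1, (single_some h2).1]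
  · rw [hgraph]; exact Set.finite_singleton _
  · rw [hgraph, Set.ncard_singleton]; exact hn

lemma single_mul (x0 : lam) (c d : S) :
    mulE (single x0 c) (single x0 d) = single x0 (c * d) := by
  funext x z
  by_cases h : x = x0 ∧ z = x0
  · rw [h.1, h.2, single_apply]
    exact mulE_some (fun y' hh => (single_some hh).2) (single_apply x0 c) (single_apply x0 d)
  · have : single x0 (c * d) x z = none := by simp [single, if_neg h]
    rw [this]
    apply mulE_none
    rintro ⟨y, s, t, h1, h2⟩
    have e1 := single_some (x := x) (y := y) (by rw [h1]; rfl)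
    have e2 := single_some (x := y) (y := z) (by rw [h2]; rfl)
    exact h ⟨e1.1, e2.2⟩

end Aux


/-- The semigroup `𝓘_λ^n(S)` is an inverse semigroup (every element has a unique
inverse) if and only if `S` is an inverse semigroup. -/
theorem inverse_iff (lam S : Type) [Nonempty lam] [Semigroup S]
    (n : ℕ) (hn : 0 < n) (hcard : (n : Cardinal) ≤ Cardinal.mk lam) :
    (∀ f : Elem lam S, Valid n f →
        ∃ g : Elem lam S, Valid n g ∧ mulE (mulE f g) f = f ∧ mulE (mulE g f) g = g ∧
          ∀ g' : Elem lam S, Valid n g' → mulE (mulE f g') f = f →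
            mulE (mulE g' f) g' = g' → g' = g) ↔
      (∀ a : S, ∃ b : S, a * b * a = a ∧ b * a * b = b ∧
          ∀ b' : S, a * b' * a = a → b' * a * b' = b' → b' = b) := by
  constructor
  · -- extension inverse → S inverse
    intro H a
    obtain ⟨x0⟩ := ‹Nonempty lam›
    obtain ⟨g, hvg, hfgf, hgfg, huniq⟩ := H (single x0 a) (single_valid hn x0 a)
    -- g is supported only at (x0, x0)
    have hgsupp : ∀ ⦃y x⦄, (g y x).isSome → y = x0 ∧ x = x0 := by
      intro y x h
      have h' : (mulE (mulE g (single x0 a)) g y x).isSome := by rw [hgfg]; exact h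
      obtain ⟨w, u, v, h1, h2⟩ := mulE_isSome h'
      obtain ⟨p, q, r, h3, h4⟩ := mulE_isSome (f := g) (g := single x0 a)
        (x := y) (z := w) (by rw [h1]; rfl)
      obtain ⟨hp, hw⟩ := single_some (x := p) (y := w) (by rw [h4]; rfl)
      rw [hp] at h3
      rw [hw] at h2
      have hx : x = x0 := hvg.1 h (by rw [h3]; rfl)
      rw [hx] at h2
      have hy : y = x0 := hvg.2.1 (y := x0) (by rw [h3]; rfl) (by rw [h2]; rfl)
      exact ⟨hy, hx⟩
    -- g is nonzero at (x0, x0)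
    obtain ⟨b, hgx⟩ : ∃ b, g x0 x0 = some b := by
      have h' : (mulE (mulE (single x0 a) g) (single x0 a) x0 x0).isSome := by
        rw [hfgf, single_apply]; rfl
      obtain ⟨w, u, v, h1, h2⟩ := mulE_isSome h'
      obtain ⟨p, q, r, h3, h4⟩ := mulE_isSome (f := single x0 a) (g := g)
        (x := x0) (z := w) (by rw [h1]; rfl)
      have hs := hgsupp (y := p) (x := w) (by rw [h4]; rfl)
      rw [hs.1, hs.2] at h4
      exact ⟨r, h4⟩
    -- hence g = single x0 b
    have hgeq : g = single x0 b := by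
      funext y x
      by_cases h : y = x0 ∧ x = x0
      · obtain ⟨rfl, rfl⟩ := h
        rw [hgx, single_apply]
      · have h1 : g y x = none := by
          by_contra hc
          exact h (hgsupp (Option.ne_none_iff_isSome.mp hc))
        rw [h1]; simp [single, if_neg h]
    subst hgeq
    refine ⟨b, ?_, ?_, ?_⟩
    · have := hfgf
      rw [single_mul, single_mul] at this
      have := congrFun (congrFun this x0) x0
      rw [single_apply, single_apply] at this
      exact Option.some.inj this
    · have := hgfg
      rw [single_mul, single_mul] at this
      have := congrFun (congrFun this x0) x0
      rw [single_apply, single_apply] at this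
      exact Option.some.inj this
    · intro b' ha' hb'
      have h1 : mulE (mulE (single x0 a) (single x0 b')) (single x0 a) = single x0 a := by
        rw [single_mul, single_mul, ha']
      have h2 : mulE (mulE (single x0 b') (single x0 a)) (single x0 b') = single x0 b' := by
        rw [single_mul, single_mul, hb']
      have := huniq (single x0 b') (single_valid hn x0 b') h1 h2
      have := congrFun (congrFun this x0) x0
      rw [single_apply, single_apply] at this
      exact Option.some.inj this
  · -- S inverse → extension inverse
    intro hS f hvf
    choose inv hinv1 hinv2 hinv3 using hS
    set g : Elem lam S := fun y x => (f x y).map inv with hgdef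
    have hgiff : ∀ y x, (g y x).isSome = (f x y).isSome := by
      intro y x; simp [hgdef]
    have hgsome : ∀ {y x t}, g y x = some t → ∃ s, f x y = some s ∧ t = inv s := by
      intro y x t h
      simp only [hgdef, Option.map_eq_some_iff] at h
      obtain ⟨s, hs, ht⟩ := h
      exact ⟨s, hs, ht.symm⟩
    have hvg : Valid n g := by
      have hgraph : graphOf g = Prod.swap '' graphOf f := by
        rw [Set.image_swap_eq_preimage_swap]
        ext ⟨y, x⟩
        simp [graphOf, hgiff]
      refine ⟨?_, ?_, ?_, ?_⟩
      · intro y x1 x2 h1 h2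
        rw [hgiff] at h1 h2
        exact hvf.2.1 h1 h2
      · intro y1 y2 x h1 h2
        rw [hgiff] at h1 h2
        exact hvf.1 h1 h2
      · rw [hgraph]; exact hvf.2.2.1.image _
      · rw [hgraph, Set.ncard_image_of_injective _ Prod.swap_injective]
        exact hvf.2.2.2
    refine ⟨g, hvg, ?_, ?_, ?_⟩
    · -- f g f = f
      funext x z
      cases hfz : f x z with
      | some s =>
        have hgz : g z x = some (inv s) := by simp [hgdef, hfz]
        have huF : ∀ ⦃y'⦄, (f x y').isSome → y' = z := fun y' h =>
          hvf.1 h (by rw [hfz]; rfl)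
        have hfg : mulE f g x x = some (s * inv s) := mulE_some huF hfz hgz
        have huFG : ∀ ⦃w⦄, (mulE f g x w).isSome → w = x := by
          intro w h
          obtain ⟨p, q, r, h1, h2⟩ := mulE_isSome h
          have hpz : p = z := huF (by rw [h1]; rfl)
          obtain ⟨s', hs', _⟩ := hgsome h2
          rw [hpz] at hs'
          exact hvf.2.1 (by rw [hs']; rfl) (by rw [hfz]; rfl)
        have := mulE_some huFG hfg hfz
        rw [this, hinv1 s]
      | none =>
        apply mulE_none
        rintro ⟨w, u, v, h1, h2⟩
        obtain ⟨p, q, r, h3, h4⟩ := mulE_isSome (f := f) (g := g) (x := x) (z := w)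
          (by rw [h1]; rfl)
        obtain ⟨s', hs', _⟩ := hgsome h4
        have hwx : w = x := hvf.2.1 (by rw [hs']; rfl) (by rw [h3]; rfl)
        rw [hwx, hfz] at h2
        exact nomatch h2
    · -- g f g = g
      funext y x
      cases hfz : f x y with
      | some s =>
        have hgx : g y x = some (inv s) := by simp [hgdef, hfz]
        have huG : ∀ ⦃x'⦄, (g y x').isSome → x' = x := by
          intro x' h
          rw [hgiff] at h
          exact hvf.2.1 h (by rw [hfz]; rfl)
        have hgf : mulE g f y y = some (inv s * s) := mulE_some huG hgx hfz
        have huGF : ∀ ⦃w⦄, (mulE g f y w).isSome → w = y := by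
          intro w h
          obtain ⟨p, q, r, h1, h2⟩ := mulE_isSome h
          have hpx : p = x := huG (by rw [h1]; rfl)
          rw [hpx] at h2
          exact hvf.1 (by rw [h2]; rfl) (by rw [hfz]; rfl)
        have := mulE_some huGF hgf hgx
        rw [this, hgx, hinv2 s]
      | none =>
        have hgx : g y x = none := by simp [hgdef, hfz]
        rw [hgx]
        apply mulE_none
        rintro ⟨w, u, v, h1, h2⟩
        obtain ⟨p, q, r, h3, h4⟩ := mulE_isSome (f := g) (g := f) (x := y) (z := w)
          (by rw [h1]; rfl)
        obtain ⟨s', hs', _⟩ := hgsome h2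
        have hpx : p = x := hvf.2.1 (by rw [h4]; rfl) (by rw [hs']; rfl)
        rw [hpx, hgx] at h3
        exact nomatch h3
    · -- uniqueness
      intro g' hvg' hA hB
      funext y x
      cases hfz : f x y with
      | some s =>
        -- g' y x is defined
        obtain ⟨t, hgt⟩ : ∃ t, g' y x = some t := by
          have hAe : mulE (mulE f g') f x y = some s := by rw [hA]; exact hfz
          obtain ⟨w, u, v, h1, h2⟩ := mulE_isSome (by rw [hAe]; rfl)
          have hwx : w = x := hvf.2.1 (by rw [h2]; rfl) (by rw [hfz]; rfl)
          rw [hwx] at h1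
          obtain ⟨p, q, r, h3, h4⟩ := mulE_isSome (f := f) (g := g') (x := x) (z := x)
            (by rw [h1]; rfl)
          have hpy : p = y := hvf.1 (by rw [h3]; rfl) (by rw [hfz]; rfl)
          rw [hpy] at h4
          exact ⟨r, h4⟩
        -- label equations
        have huF : ∀ ⦃y'⦄, (f x y').isSome → y' = y := fun y' h =>
          hvf.1 h (by rw [hfz]; rfl)
        have huG' : ∀ ⦃x'⦄, (g' y x').isSome → x' = x := fun x' h =>
          hvg'.1 h (by rw [hgt]; rfl)
        have hfg' : mulE f g' x x = some (s * t) := mulE_some huF hfz hgt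
        have huFG' : ∀ ⦃w⦄, (mulE f g' x w).isSome → w = x := by
          intro w h
          obtain ⟨p, q, r, h1, h2⟩ := mulE_isSome h
          have hpy : p = y := huF (by rw [h1]; rfl)
          rw [hpy] at h2
          exact huG' (by rw [h2]; rfl)
        have heq1 : s * t * s = s := by
          have := mulE_some huFG' hfg' hfz
          rw [hA, hfz] at this
          exact (Option.some.inj this).symm
        have hg'f : mulE g' f y y = some (t * s) := mulE_some huG' hgt hfz
        have huG'F : ∀ ⦃w⦄, (mulE g' f y w).isSome → w = y := by
          intro w h
          obtain ⟨p, q, r, h1, h2⟩ := mulE_isSome h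
          have hpx : p = x := huG' (by rw [h1]; rfl)
          rw [hpx] at h2
          exact huF (by rw [h2]; rfl)
        have heq2 : t * s * t = t := by
          have := mulE_some huG'F hg'f hgt
          rw [hB, hgt] at this
          exact (Option.some.inj this).symm
        have ht : t = inv s := hinv3 s t heq1 heq2
        have hgx : g y x = some (inv s) := by simp [hgdef, hfz]
        rw [hgt, hgx, ht]
      | none =>
        have hgx : g y x = none := by simp [hgdef, hfz]
        rw [hgx]
        cases hg'x : g' y x with
        | none => rfl
        | some t =>
          exfalso
          have hBe : mulE (mulE g' f) g' y x = some t := by rw [hB]; exact hg'x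
          obtain ⟨w, u, v, h1, h2⟩ := mulE_isSome (by rw [hBe]; rfl)
          have hwy : w = y := hvg'.2.1 (by rw [h2]; rfl) (by rw [hg'x]; rfl)
          rw [hwy] at h1
          obtain ⟨p, q, r, h3, h4⟩ := mulE_isSome (f := g') (g := f) (x := y) (z := y)
            (by rw [h1]; rfl)
          have hpx : p = x := hvg'.1 (by rw [h3]; rfl) (by rw [hg'x]; rfl)
          rw [hpx, hfz] at h4
          exact nomatch h4


end ISemExt
end

section
/- Let S be a monoid, λ a nonzero cardinal, n ≤ λ a positive integer, and i ≤ n. Let x be the element of 𝓘_λ^n(S) with rows (a₁,…,a_i), (s₁,…,s_i), (b₁,…,b_i) and y the element with rows (c₁,…,c_i), (t₁,…,t_i), (d₁,…,d_i), both nonzero. Then x 𝓡 y in 𝓘_λ^n(S) if and only if there exists a permutation σ of {1,…,i} such that a_j = c_{σ(j)} and s_j 𝓡 t_{σ(j)} in S for all j = 1,…,i. -/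
open Classical

namespace ISemExt

/-- Green's relation `𝓡` in the monoid `S`. -/
def GreenRS {S : Type} [Monoid S] (x y : S) : Prop :=
  (∃ u, x = y * u) ∧ (∃ v, y = x * v)

/-- Green's relation `𝓡` in the semigroup `𝓘_λ^n(S)` (with identity adjoined). -/
def GreenRI {lam S : Type} [Mul S] (n : ℕ) (f g : Elem lam S) : Prop :=
  (f = g ∨ ∃ u : Elem lam S, Valid n u ∧ f = mulE g u) ∧
  (g = f ∨ ∃ v : Elem lam S, Valid n v ∧ g = mulE f v)

section Aux

variable {lam S : Type}

theorem mk3_some {i : ℕ} {a : Fin i → lam} {s : Fin i → S} {b : Fin i → lam}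
    (ha : Function.Injective a) (j : Fin i) :
    mk3 a s b (a j) (b j) = some (s j) := by
  have h : ∃ k, a k = a j ∧ b k = b j := ⟨j, rfl, rfl⟩
  have hch : h.choose = j := ha h.choose_spec.1
  unfold mk3
  rw [dif_pos h, hch]

theorem mk3_none {i : ℕ} {a : Fin i → lam} {s : Fin i → S} {b : Fin i → lam}
    {x y : lam} (hex : ¬ ∃ j, a j = x ∧ b j = y) :
    mk3 a s b x y = none := by
  unfold mk3
  exact dif_neg hex

theorem mk3_eq_some {i : ℕ} {a : Fin i → lam} {s : Fin i → S} {b : Fin i → lam}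
    (ha : Function.Injective a) {x y : lam} {v : S}
    (h : mk3 a s b x y = some v) : ∃ j, a j = x ∧ b j = y ∧ s j = v := by
  by_cases hex : ∃ j, a j = x ∧ b j = y
  · obtain ⟨j, hj1, hj2⟩ := hex
    refine ⟨j, hj1, hj2, ?_⟩
    rw [← hj1, ← hj2, mk3_some ha] at h
    exact Option.some.inj h
  · rw [mk3_none hex] at h
    exact nomatch h

theorem mulE_eq_some_s9 [Mul S] {f g : Elem lam S} {x z : lam} {w : S}
    (h : mulE f g x z = some w) :
    ∃ y p q, f x y = some p ∧ g y z = some q ∧ w = p * q := by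
  unfold mulE at h
  split at h
  · next hex =>
    exact ⟨hex.choose, hex.choose_spec.choose, hex.choose_spec.choose_spec.choose,
      hex.choose_spec.choose_spec.choose_spec.1,
      hex.choose_spec.choose_spec.choose_spec.2,
      (Option.some.inj h).symm⟩
  · exact nomatch h

theorem mk3_mul_mk3 [Mul S] {i : ℕ} {c : Fin i → lam} {t : Fin i → S} {d : Fin i → lam}
    {u' : Fin i → S} {b : Fin i → lam}
    (hc : Function.Injective c) (hd : Function.Injective d) :
    mulE (mk3 c t d) (mk3 d u' b) = mk3 c (fun j => t j * u' j) b := by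
  funext x z
  by_cases hex : ∃ j, c j = x ∧ b j = z
  · obtain ⟨j, hj1, hj2⟩ := hex
    subst hj1; subst hj2
    rw [mk3_some hc j]
    have hcond : ∃ y p q, mk3 c t d (c j) y = some p ∧ mk3 d u' b y (b j) = some q :=
      ⟨d j, t j, u' j, mk3_some hc j, mk3_some hd j⟩
    unfold mulE
    rw [dif_pos hcond]
    congr 1
    obtain ⟨k, hk1, hk2, hk3⟩ :=
      mk3_eq_some hc hcond.choose_spec.choose_spec.choose_spec.1
    have hkj : k = j := hc hk1
    subst hkj
    obtain ⟨m, hm1, hm2, hm3⟩ :=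
      mk3_eq_some hd hcond.choose_spec.choose_spec.choose_spec.2
    have hmk : m = k := hd (hm1.trans hk2.symm)
    subst hmk
    rw [hk3, hm3]
  · rw [mk3_none hex]
    unfold mulE
    rw [dif_neg]
    rintro ⟨y, p, q, hp, hq⟩
    obtain ⟨k, hk1, hk2, -⟩ := mk3_eq_some hc hp
    obtain ⟨m, hm1, hm2, -⟩ := mk3_eq_some hd hq
    have hmk : m = k := hd (hm1.trans hk2.symm)
    subst hmk
    exact hex ⟨m, hk1, hm2⟩

theorem mk3_reindex {i : ℕ} {c : Fin i → lam} {t : Fin i → S} {d : Fin i → lam}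
    (hc : Function.Injective c) (σ : Equiv.Perm (Fin i)) :
    mk3 (fun j => c (σ j)) (fun j => t (σ j)) (fun j => d (σ j)) = mk3 c t d := by
  funext x y
  by_cases hex : ∃ j, c j = x ∧ d j = y
  · obtain ⟨j, hj1, hj2⟩ := hex
    subst hj1; subst hj2
    rw [mk3_some hc j]
    have hinj : Function.Injective (fun j => c (σ j)) := hc.comp σ.injective
    have h := mk3_some (a := fun j => c (σ j)) (s := fun j => t (σ j))
      (b := fun j => d (σ j)) hinj (σ.symm j)
    simpa using h
  · rw [mk3_none hex, mk3_none]
    rintro ⟨j, hj1, hj2⟩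
    exact hex ⟨σ j, hj1, hj2⟩

theorem mk3_valid {i n : ℕ} {a : Fin i → lam} {s : Fin i → S} {b : Fin i → lam}
    (ha : Function.Injective a) (hb : Function.Injective b) (hin : i ≤ n) :
    Valid n (mk3 a s b) := by
  have hiff : ∀ x y, (mk3 a s b x y).isSome ↔ ∃ j, a j = x ∧ b j = y := by
    intro x y
    by_cases hex : ∃ j, a j = x ∧ b j = y
    · unfold mk3; rw [dif_pos hex]; simpa using hex
    · rw [mk3_none hex]; simpa using hex
  have hgr : graphOf (mk3 a s b) = Set.range (fun j => (a j, b j)) := by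
    ext ⟨x, y⟩
    simp only [graphOf, Set.mem_setOf_eq, Set.mem_range, hiff, Prod.mk.injEq]
  refine ⟨?_, ?_, ?_, ?_⟩
  · intro x y₁ y₂ h1 h2
    obtain ⟨j, hj1, hj2⟩ := (hiff _ _).1 h1
    obtain ⟨k, hk1, hk2⟩ := (hiff _ _).1 h2
    rw [← hj2, ← hk2, ha (hj1.trans hk1.symm)]
  · intro x₁ x₂ y h1 h2
    obtain ⟨j, hj1, hj2⟩ := (hiff _ _).1 h1
    obtain ⟨k, hk1, hk2⟩ := (hiff _ _).1 h2
    rw [← hj1, ← hk1, hb (hj2.trans hk2.symm)]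
  · rw [hgr]; exact Set.finite_range _
  · rw [hgr]
    refine le_trans ?_ hin
    rw [← Set.image_univ]
    calc ((fun j => (a j, b j)) '' Set.univ).ncard
        ≤ (Set.univ : Set (Fin i)).ncard := Set.ncard_image_le Set.finite_univ
      _ = i := by simp [Set.ncard_univ]

end Aux

/-- Characterization of Green's relation `𝓡` on `𝓘_λ^n(S)` for a monoid `S`. -/
theorem greenR_iff (lam S : Type) [Nonempty lam] [Monoid S]
    (n i : ℕ) (hn : 0 < n) (hcard : (n : Cardinal) ≤ Cardinal.mk lam)
    (hi : 0 < i) (hin : i ≤ n)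
    (a b c d : Fin i → lam) (s t : Fin i → S)
    (ha : Function.Injective a) (hb : Function.Injective b)
    (hc : Function.Injective c) (hd : Function.Injective d) :
    GreenRI n (mk3 a s b) (mk3 c t d) ↔
      ∃ σ : Equiv.Perm (Fin i), ∀ j, a j = c (σ j) ∧ GreenRS (s j) (t (σ j)) := by
  constructor
  · rintro ⟨h1, h2⟩
    have E1 : ∀ j, ∃ k q, c k = a j ∧ s j = t k * q := by
      intro j
      rcases h1 with heq | ⟨u, -, hu⟩
      · have h := mk3_some ha (s := s) (b := b) j
        rw [heq] at h
        obtain ⟨k, hk1, -, hk3⟩ := mk3_eq_some hc h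
        exact ⟨k, 1, hk1, by rw [hk3, mul_one]⟩
      · have h := mk3_some ha (s := s) (b := b) j
        rw [hu] at h
        obtain ⟨y, p, q, hp, hq, hw⟩ := mulE_eq_some_s9 h
        obtain ⟨k, hk1, -, hk3⟩ := mk3_eq_some hc hp
        exact ⟨k, q, hk1, by rw [hw, hk3]⟩
    have E2 : ∀ k, ∃ j q, a j = c k ∧ t k = s j * q := by
      intro k
      rcases h2 with heq | ⟨v, -, hv⟩
      · have h := mk3_some hc (s := t) (b := d) k
        rw [heq] at h
        obtain ⟨j, hj1, -, hj3⟩ := mk3_eq_some ha h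
        exact ⟨j, 1, hj1, by rw [hj3, mul_one]⟩
      · have h := mk3_some hc (s := t) (b := d) k
        rw [hv] at h
        obtain ⟨y, p, q, hp, hq, hw⟩ := mulE_eq_some_s9 h
        obtain ⟨j, hj1, -, hj3⟩ := mk3_eq_some ha hp
        exact ⟨j, q, hj1, by rw [hw, hj3]⟩
    choose τ qf hτ hsq using E1
    choose ρ qg hρ htq using E2
    have hρτ : ∀ j, ρ (τ j) = j := fun j => ha (by rw [hρ, hτ])
    have hτρ : ∀ k, τ (ρ k) = k := fun k => hc (by rw [hτ, hρ])
    refine ⟨⟨τ, ρ, hρτ, hτρ⟩, fun j => ⟨(hτ j).symm, ⟨qf j, hsq j⟩, ⟨qg (τ j), ?_⟩⟩⟩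
    have h := htq (τ j)
    rwa [hρτ j] at h
  · rintro ⟨σ, hσ⟩
    have hac : ∀ j, a j = c (σ j) := fun j => (hσ j).1
    choose u' hu' using fun j => (hσ j).2.1
    choose v' hv' using fun j => (hσ j).2.2
    have hcs : Function.Injective (fun j => c (σ j)) := hc.comp σ.injective
    have hds : Function.Injective (fun j => d (σ j)) := hd.comp σ.injective
    have haeq : a = fun j => c (σ j) := funext hac
    have hfeq : mk3 a s b = mk3 (fun j => c (σ j)) s b := by rw [haeq]
    have hgeq : mk3 c t d
        = mk3 (fun j => c (σ j)) (fun j => t (σ j)) (fun j => d (σ j)) :=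
      (mk3_reindex hc σ).symm
    constructor
    · right
      refine ⟨mk3 (fun j => d (σ j)) u' b, mk3_valid hds hb hin, ?_⟩
      rw [hfeq, hgeq, mk3_mul_mk3 hcs hds,
        show s = (fun j => t (σ j) * u' j) from funext hu']
    · right
      refine ⟨mk3 b v' (fun j => d (σ j)), mk3_valid hb hds hin, ?_⟩
      rw [hgeq, hfeq, mk3_mul_mk3 hcs hb,
        show (fun j => t (σ j)) = (fun j => s j * v' j) from funext hv']

end ISemExt
end

section
/- Let λ be an infinite cardinal and n a positive integer. Then the chain {0} ⊆ 𝓘_λ^1 ⊆ 𝓘_λ^2 ⊆ ⋯ ⊆ 𝓘_λ^n is a strongly tight ideal series for the semigroup 𝓘_λ^n: each 𝓘_λ^k is an ideal of 𝓘_λ^n, {0} is finite, and each difference 𝓘_λ^k \ 𝓘_λ^{k-1} (with 𝓘_λ^0 = {0}) is a strongly ω-unstable subset. -/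
open Classical

namespace ISemExt

/-- Partial maps of `lam`: the carrier of the symmetric inverse semigroup. -/
def PElem (lam : Type) : Type := lam → Option lam

/-- The zero element (the empty map). -/
def pzero (lam : Type) : PElem lam := fun _ => none

/-- Composition of partial maps. -/
def pmul {lam : Type} (f g : PElem lam) : PElem lam :=
  fun x => (f x).bind g

/-- The domain of a partial map. -/
def pdom {lam : Type} (f : PElem lam) : Set lam := {x | (f x).isSome}

/-- Membership in `𝓘_λ^k`: injectivity and rank at most `k`. -/
def IK (lam : Type) (k : ℕ) : Set (PElem lam) :=
  {f | (∀ ⦃x₁ x₂ y⦄, f x₁ = some y → f x₂ = some y → x₁ = x₂) ∧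
    (pdom f).Finite ∧ (pdom f).ncard ≤ k}

/-- A subset `D` of a semigroup (with multiplication `m`) is strongly ω-unstable. -/
def StronglyUnstable {X : Type} (m : X → X → X) (D : Set X) : Prop :=
  D.Infinite ∧ ∀ a ∈ D, ∀ b ∈ D, ∀ B ⊆ D, B.Infinite →
    ¬ ((fun x => m a x) '' B ∪ (fun x => m x b) '' B ⊆ D)

variable {lam : Type}

lemma mem_pdom_iff {f : PElem lam} {x : lam} : x ∈ pdom f ↔ ∃ z, f x = some z := by
  simp [pdom, Option.isSome_iff_exists]

lemma pdom_pmul_subset (f g : PElem lam) : pdom (pmul f g) ⊆ pdom f := by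
  intro x hx
  rw [mem_pdom_iff] at hx ⊢
  obtain ⟨z, hz⟩ := hx
  simp only [pmul] at hz; replace hz := Option.bind_eq_some_iff.mp hz
  obtain ⟨w, hw, _⟩ := hz
  exact ⟨w, hw⟩

lemma pmul_mem_left {k m : ℕ} {f g : PElem lam} (hf : f ∈ IK lam k) (hg : g ∈ IK lam m) :
    pmul f g ∈ IK lam k := by
  obtain ⟨hfi, hffin, hfcard⟩ := hf
  obtain ⟨hgi, -, -⟩ := hg
  refine ⟨?_, hffin.subset (pdom_pmul_subset f g),
    le_trans (Set.ncard_le_ncard (pdom_pmul_subset f g) hffin) hfcard⟩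
  intro x₁ x₂ y h1 h2
  simp only [pmul] at h1 h2; replace h1 := Option.bind_eq_some_iff.mp h1; replace h2 := Option.bind_eq_some_iff.mp h2
  obtain ⟨z₁, hz₁, hz₁'⟩ := h1
  obtain ⟨z₂, hz₂, hz₂'⟩ := h2
  obtain rfl := hgi hz₁' hz₂'
  exact hfi hz₁ hz₂

lemma pmul_mem_right {k m : ℕ} {f g : PElem lam} (hf : f ∈ IK lam k) (hg : g ∈ IK lam m) :
    pmul g f ∈ IK lam k := by
  obtain ⟨hfi, hffin, hfcard⟩ := hf
  obtain ⟨hgi, hgfin, -⟩ := hg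
  refine ⟨?_, hgfin.subset (pdom_pmul_subset g f), ?_⟩
  · intro x₁ x₂ y h1 h2
    simp only [pmul] at h1 h2; replace h1 := Option.bind_eq_some_iff.mp h1; replace h2 := Option.bind_eq_some_iff.mp h2
    obtain ⟨z₁, hz₁, hz₁'⟩ := h1
    obtain ⟨z₂, hz₂, hz₂'⟩ := h2
    obtain rfl := hfi hz₁' hz₂'
    exact hgi hz₁ hz₂
  · refine le_trans (Set.ncard_le_ncard_of_injOn (fun x => (g x).getD x) ?_ ?_ hffin) hfcard
    · intro x hx
      rw [mem_pdom_iff] at hx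
      obtain ⟨z, hz⟩ := hx
      simp only [pmul] at hz; replace hz := Option.bind_eq_some_iff.mp hz
      obtain ⟨w, hw, hw'⟩ := hz
      simp only [hw, Option.getD_some]
      exact mem_pdom_iff.mpr ⟨z, hw'⟩
    · intro x₁ h₁ x₂ h₂ he
      rw [mem_pdom_iff] at h₁ h₂
      obtain ⟨z₁, hz₁⟩ := h₁
      obtain ⟨z₂, hz₂⟩ := h₂
      simp only [pmul] at hz₁ hz₂; replace hz₁ := Option.bind_eq_some_iff.mp hz₁; replace hz₂ := Option.bind_eq_some_iff.mp hz₂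
      obtain ⟨w₁, hw₁, -⟩ := hz₁
      obtain ⟨w₂, hw₂, -⟩ := hz₂
      simp only [hw₁, hw₂, Option.getD_some] at he
      subst he
      exact hgi hw₁ hw₂

lemma IK_zero_eq (lam : Type) : IK lam 0 = {pzero lam} := by
  ext f
  constructor
  · rintro ⟨-, hfin, hcard⟩
    have hdom : pdom f = ∅ := (Set.ncard_eq_zero hfin).mp (Nat.le_zero.mp hcard)
    have hall : ∀ x, f x = none := by
      intro x
      by_contra h
      have hx : x ∈ pdom f := Option.ne_none_iff_isSome.mp h
      rw [hdom] at hx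
      exact hx
    exact Set.mem_singleton_iff.mpr (funext hall)
  · rintro rfl
    refine ⟨?_, ?_, ?_⟩
    · intro x₁ x₂ y h1 _
      exact absurd h1 (by simp [pzero])
    · have : pdom (pzero lam) = ∅ := by ext x; simp [pdom, pzero]
      rw [this]; exact Set.finite_empty
    · have : pdom (pzero lam) = ∅ := by ext x; simp [pdom, pzero]
      rw [this]; simp

lemma rank_eq {k : ℕ} (hk : 1 ≤ k) {f : PElem lam} (hf : f ∈ IK lam k \ IK lam (k-1)) :
    (pdom f).ncard = k := by
  obtain ⟨⟨hi, hfin, hle⟩, hnot⟩ := hf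
  by_contra h
  exact hnot ⟨hi, hfin, by omega⟩

lemma IK_diff_infinite (lam : Type) [Infinite lam] {k : ℕ} (hk : 1 ≤ k) :
    (IK lam k \ IK lam (k-1)).Infinite := by
  classical
  let t := Infinite.natEmbedding lam
  let F : ℕ → PElem lam := fun m x => if ∃ i, i < k ∧ x = t (m*k + i) then some x else none
  have hdom : ∀ m, pdom (F m) = (fun i => t (m*k+i)) '' (Set.Iio k) := by
    intro m; ext x
    rw [mem_pdom_iff]
    constructor
    · rintro ⟨z, hz⟩
      simp only [F] at hz
      by_cases h : ∃ i, i < k ∧ x = t (m*k + i)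
      · obtain ⟨i, hi, rfl⟩ := h
        exact ⟨i, hi, rfl⟩
      · simp [h] at hz
    · rintro ⟨i, hi, rfl⟩
      exact ⟨t (m*k+i), by simp only [F]; rw [if_pos ⟨i, hi, rfl⟩]⟩
  have hinj2 : ∀ m, Set.InjOn (fun i => t (m*k+i)) (Set.Iio k) := by
    intro m i hi j hj he
    have := t.injective he
    omega
  have hcard : ∀ m, (pdom (F m)).ncard = k := by
    intro m
    rw [hdom m, Set.ncard_image_of_injOn (hinj2 m), ← Finset.coe_range,
      Set.ncard_coe_finset, Finset.card_range]
  have hfin : ∀ m, (pdom (F m)).Finite := by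
    intro m; rw [hdom m]; exact (Set.finite_Iio k).image _
  have hmem : ∀ m, F m ∈ IK lam k \ IK lam (k-1) := by
    intro m
    have hinjF : ∀ ⦃x₁ x₂ y : lam⦄, F m x₁ = some y → F m x₂ = some y → x₁ = x₂ := by
      intro x₁ x₂ y h1 h2
      simp only [F] at h1 h2
      split at h1
      · split at h2
        · rw [Option.some_inj] at h1 h2; rw [h1, h2]
        · exact absurd h2 (by simp)
      · exact absurd h1 (by simp)
    refine ⟨⟨hinjF, hfin m, le_of_eq (hcard m)⟩, ?_⟩
    rintro ⟨-, -, hle⟩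
    rw [hcard m] at hle
    omega
  have hFinj : Function.Injective F := by
    intro m m' he
    have h1 : t (m*k) ∈ pdom (F m') := by
      rw [← he, hdom m]
      exact ⟨0, Set.mem_Iio.mpr hk, by simp⟩
    rw [hdom m'] at h1
    obtain ⟨i, hi, hie⟩ := h1
    have h2 : t (m'*k) ∈ pdom (F m) := by
      rw [he, hdom m']
      exact ⟨0, Set.mem_Iio.mpr hk, by simp⟩
    rw [hdom m] at h2
    obtain ⟨j, hj, hje⟩ := h2
    have e1 := t.injective hie
    have e2 := t.injective hje
    have : m * k = m' * k := by omega
    exact Nat.eq_of_mul_eq_mul_right hk this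
  exact Set.infinite_of_injective_forall_mem hFinj hmem
lemma key {k : ℕ} (hk : 1 ≤ k) {a b : PElem lam}
    (ha : a ∈ IK lam k \ IK lam (k-1)) (hb : b ∈ IK lam k \ IK lam (k-1))
    {B : Set (PElem lam)} (hB : B ⊆ IK lam k \ IK lam (k-1)) (hBinf : B.Infinite)
    (h : (fun x => pmul a x) '' B ∪ (fun x => pmul x b) '' B ⊆ IK lam k \ IK lam (k-1)) :
    False := by
  classical
  obtain ⟨hai, hafin, -⟩ := ha.1
  have hacard : (pdom a).ncard = k := rank_eq hk ha
  obtain ⟨-, hbfin, -⟩ := hb.1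
  -- the image of a
  set ima : Set lam := {z | ∃ y, a y = some z} with hima
  have himaeq : ima = (fun y => (a y).getD y) '' pdom a := by
    ext z
    constructor
    · rintro ⟨y, hy⟩
      exact ⟨y, mem_pdom_iff.mpr ⟨z, hy⟩, by simp [hy]⟩
    · rintro ⟨y, hy, rfl⟩
      obtain ⟨w, hw⟩ := mem_pdom_iff.mp hy
      exact ⟨y, by simp [hw]⟩
  have himainj : Set.InjOn (fun y => (a y).getD y) (pdom a) := by
    intro y₁ h₁ y₂ h₂ he
    obtain ⟨w₁, hw₁⟩ := mem_pdom_iff.mp h₁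
    obtain ⟨w₂, hw₂⟩ := mem_pdom_iff.mp h₂
    simp only [hw₁, hw₂, Option.getD_some] at he
    subst he
    exact hai hw₁ hw₂
  have himacard : ima.ncard = k := by
    rw [himaeq, Set.ncard_image_of_injOn himainj, hacard]
  have himafin : ima.Finite := by
    rw [himaeq]; exact hafin.image _
  -- per-element facts
  have hfact : ∀ x ∈ B, pdom x = ima ∧ ∀ ⦃y z⦄, x y = some z → z ∈ pdom b := by
    intro x hxB
    obtain ⟨-, hxfin, -⟩ := (hB hxB).1
    have hxcard : (pdom x).ncard = k := rank_eq hk (hB hxB)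
    have hax : pmul a x ∈ IK lam k \ IK lam (k-1) := h (Or.inl ⟨x, hxB, rfl⟩)
    have haxcard : (pdom (pmul a x)).ncard = k := rank_eq hk hax
    have haxdom : pdom (pmul a x) = pdom a :=
      Set.eq_of_subset_of_ncard_le (pdom_pmul_subset a x) (by rw [hacard, haxcard]) hafin
    have hsub : ima ⊆ pdom x := by
      rintro z ⟨y, hy⟩
      have hy' : y ∈ pdom (pmul a x) := by
        rw [haxdom]; exact mem_pdom_iff.mpr ⟨z, hy⟩
      obtain ⟨w, hw⟩ := mem_pdom_iff.mp hy'
      simp only [pmul, hy, Option.bind_some] at hw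
      exact mem_pdom_iff.mpr ⟨w, hw⟩
    have hdomx : pdom x = ima :=
      (Set.eq_of_subset_of_ncard_le hsub (by rw [hxcard, himacard]) hxfin).symm
    have hxb : pmul x b ∈ IK lam k \ IK lam (k-1) := h (Or.inr ⟨x, hxB, rfl⟩)
    have hxbcard : (pdom (pmul x b)).ncard = k := rank_eq hk hxb
    have hxbdom : pdom (pmul x b) = pdom x :=
      Set.eq_of_subset_of_ncard_le (pdom_pmul_subset x b) (by rw [hxcard, hxbcard]) hxfin
    refine ⟨hdomx, ?_⟩
    intro y z hyz
    have hy' : y ∈ pdom (pmul x b) := by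
      rw [hxbdom]; exact mem_pdom_iff.mpr ⟨z, hyz⟩
    obtain ⟨w, hw⟩ := mem_pdom_iff.mp hy'
    simp only [pmul, hyz, Option.bind_some] at hw
    exact mem_pdom_iff.mpr ⟨w, hw⟩
  -- injection into a finite type
  haveI : Finite ↥ima := himafin.to_subtype
  haveI : Finite ↥(pdom b) := hbfin.to_subtype
  let G : PElem lam → (↥ima → Option ↥(pdom b)) := fun f y =>
    if hc : ∃ z, f y.1 = some z ∧ z ∈ pdom b then some ⟨hc.choose, hc.choose_spec.2⟩ else none
  have hGinj : Set.InjOn G B := by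
    intro x₁ hx₁ x₂ hx₂ he
    obtain ⟨hd₁, hv₁⟩ := hfact x₁ hx₁
    obtain ⟨hd₂, hv₂⟩ := hfact x₂ hx₂
    funext y
    by_cases hy : y ∈ ima
    · have hy₁ : y ∈ pdom x₁ := hd₁ ▸ hy
      have hy₂ : y ∈ pdom x₂ := hd₂ ▸ hy
      obtain ⟨z₁, hz₁⟩ := mem_pdom_iff.mp hy₁
      obtain ⟨z₂, hz₂⟩ := mem_pdom_iff.mp hy₂
      have hc₁ : ∃ z, x₁ y = some z ∧ z ∈ pdom b := ⟨z₁, hz₁, hv₁ hz₁⟩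
      have hc₂ : ∃ z, x₂ y = some z ∧ z ∈ pdom b := ⟨z₂, hz₂, hv₂ hz₂⟩
      have he' := congrFun he ⟨y, hy⟩
      simp only [G, dif_pos hc₁, dif_pos hc₂, Option.some_inj, Subtype.mk_eq_mk] at he'
      have e₁ : x₁ y = some hc₁.choose := hc₁.choose_spec.1
      have e₂ : x₂ y = some hc₂.choose := hc₂.choose_spec.1
      rw [e₁, e₂, he']
    · have hy₁ : y ∉ pdom x₁ := hd₁ ▸ hy
      have hy₂ : y ∉ pdom x₂ := hd₂ ▸ hy
      rw [mem_pdom_iff] at hy₁ hy₂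
      have e₁ : x₁ y = none := by
        cases hx : x₁ y with
        | none => rfl
        | some z => exact absurd ⟨z, hx⟩ hy₁
      have e₂ : x₂ y = none := by
        cases hx : x₂ y with
        | none => rfl
        | some z => exact absurd ⟨z, hx⟩ hy₂
      rw [e₁, e₂]
  haveI := Fintype.ofFinite ↥(pdom b)
  haveI : Finite (↥ima → Option ↥(pdom b)) := by infer_instance
  have himg : (G '' B).Finite := Set.finite_univ.subset (Set.subset_univ _)
  have hBfin : B.Finite := Set.Finite.of_finite_image himg hGinj
  exact hBinf hBfin

/-- For an infinite cardinal `λ` and a positive integer `n`, the chain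
`{0} ⊆ 𝓘_λ^1 ⊆ 𝓘_λ^2 ⊆ ⋯ ⊆ 𝓘_λ^n` is a strongly tight ideal series for `𝓘_λ^n`. -/
theorem strongly_tight_series_In (lam : Type) [Infinite lam] (n : ℕ) (hn : 0 < n) :
    (∀ k ≤ n, ∀ f ∈ IK lam k, ∀ g ∈ IK lam n,
      pmul f g ∈ IK lam k ∧ pmul g f ∈ IK lam k) ∧
    (∀ k ≤ n, ∀ j ≤ k, IK lam j ⊆ IK lam k) ∧
    (IK lam 0 = {pzero lam}) ∧ (IK lam 0).Finite ∧
    (∀ k, 1 ≤ k → k ≤ n →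
      StronglyUnstable (fun f g : PElem lam => pmul f g)
        (IK lam k \ IK lam (k - 1))) := by
  refine ⟨?_, ?_, IK_zero_eq lam, ?_, ?_⟩
  · intro k _ f hf g hg
    exact ⟨pmul_mem_left hf hg, pmul_mem_right hf hg⟩
  · intro k _ j hjk f hf
    exact ⟨hf.1, hf.2.1, le_trans hf.2.2 hjk⟩
  · rw [IK_zero_eq]; exact Set.finite_singleton _
  · intro k hk1 _
    exact ⟨IK_diff_infinite lam hk1, fun a ha b hb B hB hBinf hcon =>
      key hk1 ha hb hB hBinf hcon⟩


end ISemExt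
end
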